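/- (Location-scale form, equation (2.8), negative case) Suppose F_c(β) = G((β - m)/σ) where σ > 0, m < 0, and G : ℝ → ℝ is a continuous, strictly increasing CDF satisfying the symmetry G(-x) = 1 - G(x) for all x (so G(0) = 1/2 and Med_c = m). If O < |1 - 2·F_c(0)|, then the unique median of the mixture CDF F equals m + σ·G^{-1}((1 + O)/2), where G^{-1}((1+O)/2) is the unique x with G(x) = (1+O)/2. -/

import Mathlib

open Filter Topology Function

/-- The mixture CDF `F(β) = π·1_{β ≥ 0} + (1-π)·F_c(β)`. -/
noncomputable def mixCDF (p : ℝ) (Fc : ℝ → ℝ) (β : ℝ) : ℝ :=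
  (if 0 ≤ β then p else 0) + (1 - p) * Fc β

/-- `M` is a median of `F`: `F(M) ≥ 1/2` and the left limit `F(M⁻) ≤ 1/2`. -/
def IsMedian (F : ℝ → ℝ) (M : ℝ) : Prop :=
  1 / 2 ≤ F M ∧ Function.leftLim F M ≤ 1 / 2

/-! When the continuous part already carries more than half the mass below `0`, i.e.
`(1 - π) F_c(0) > 1/2`, the atom at `0` lies strictly above the median, so the median is the
point where `(1 - π) F_c` crosses `1/2`. In the location-scale model this crossing is
`F_c(M) = (1 + O)/2`, i.e. `M = m + σ G⁻¹((1 + O)/2)`. -/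

section MixCDF

variable {p : ℝ} {Fc : ℝ → ℝ}

lemma mixCDF_of_neg {β : ℝ} (hβ : β < 0) : mixCDF p Fc β = (1 - p) * Fc β := by
  simp [mixCDF, not_le.mpr hβ]

lemma mixCDF_of_nonneg {β : ℝ} (hβ : 0 ≤ β) : mixCDF p Fc β = p + (1 - p) * Fc β := by
  simp [mixCDF, hβ]

lemma leftLim_mixCDF_of_nonpos (hFc : Continuous Fc) {M : ℝ} (hM : M ≤ 0) :
    leftLim (mixCDF p Fc) M = (1 - p) * Fc M := by
  have hcont : Continuous fun β ↦ (1 - p) * Fc β := by fun_prop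
  refine leftLim_eq_of_tendsto ((hcont.tendsto M).mono_left nhdsWithin_le_nhds |>.congr' ?_)
  filter_upwards [self_mem_nhdsWithin] with β hβ
  exact (mixCDF_of_neg (lt_of_lt_of_le hβ hM)).symm

lemma leftLim_mixCDF_of_pos (hFc : Continuous Fc) {M : ℝ} (hM : 0 < M) :
    leftLim (mixCDF p Fc) M = p + (1 - p) * Fc M := by
  have hcont : Continuous fun β ↦ p + (1 - p) * Fc β := by fun_prop
  refine leftLim_eq_of_tendsto ((hcont.tendsto M).mono_left nhdsWithin_le_nhds |>.congr' ?_)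
  filter_upwards [mem_nhdsWithin_of_mem_nhds (Ioi_mem_nhds hM)] with β hβ
  exact (mixCDF_of_nonneg (le_of_lt hβ)).symm

lemma isMedian_mixCDF_iff_of_half_lt (hp0 : 0 ≤ p) (hp1 : p ≤ 1) (hFc_cont : Continuous Fc)
    (hFc_mono : Monotone Fc) (hhalf : 1 / 2 < (1 - p) * Fc 0) {M : ℝ} :
    IsMedian (mixCDF p Fc) M ↔ M < 0 ∧ (1 - p) * Fc M = 1 / 2 := by
  constructor
  · rintro ⟨hFM, hleft⟩
    have hM : M < 0 := by
      by_contra! hM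
      rcases hM.eq_or_lt with rfl | hpos
      · rw [leftLim_mixCDF_of_nonpos hFc_cont le_rfl] at hleft
        linarith
      · rw [leftLim_mixCDF_of_pos hFc_cont hpos] at hleft
        have : (1 - p) * Fc 0 ≤ (1 - p) * Fc M :=
          mul_le_mul_of_nonneg_left (hFc_mono hpos.le) (sub_nonneg.mpr hp1)
        linarith
    rw [mixCDF_of_neg hM] at hFM
    rw [leftLim_mixCDF_of_nonpos hFc_cont hM.le] at hleft
    exact ⟨hM, le_antisymm hleft hFM⟩
  · rintro ⟨hM, hFM⟩
    exact ⟨(mixCDF_of_neg hM).trans hFM |>.ge,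
      (leftLim_mixCDF_of_nonpos hFc_cont hM.le).trans hFM |>.le⟩

end MixCDF

lemma apply_zero_eq_half_of_symm {G : ℝ → ℝ} (hG_sym : ∀ x, G (-x) = 1 - G x) :
    G 0 = 1 / 2 := by
  have := hG_sym 0
  rw [neg_zero] at this
  linarith

theorem location_scale_median_neg_case_general (p : ℝ) (hp0 : 0 ≤ p) (hp1 : p < 1)
    (Fc : ℝ → ℝ) (hFc_cont : Continuous Fc) (hFc_mono : StrictMono Fc)
    (G : ℝ → ℝ) (hG_cont : Continuous G) (hG_mono : StrictMono G)
    (hG_bot : Tendsto G atBot (𝓝 0))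
    (hG_sym : ∀ x : ℝ, G (-x) = 1 - G x)
    (m σ : ℝ) (hσ : 0 < σ)
    (hFc : ∀ β : ℝ, Fc β = G ((β - m) / σ)) (hm : m < 0)
    (hO : p / (1 - p) < |1 - 2 * Fc 0|) :
    ∃ x : ℝ, G x = (1 + p / (1 - p)) / 2 ∧
      IsMedian (mixCDF p Fc) (m + σ * x) ∧
      ∀ M : ℝ, IsMedian (mixCDF p Fc) M → M = m + σ * x := by
  have h1p : 0 < 1 - p := sub_pos.mpr hp1
  have hFc0 : 1 / 2 < Fc 0 := by
    rw [hFc, ← apply_zero_eq_half_of_symm hG_sym]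
    exact hG_mono (div_pos (by linarith) hσ)
  have hhalf : 1 / 2 < (1 - p) * Fc 0 := by
    rw [abs_of_neg (by linarith), div_lt_iff₀ h1p] at hO
    linarith
  have hmedian (M : ℝ) :=
    isMedian_mixCDF_iff_of_half_lt (M := M) hp0 hp1.le hFc_cont hFc_mono.monotone hhalf
  set t := (1 + p / (1 - p)) / 2
  have ht : (1 - p) * t = 1 / 2 := by simp only [t]; field_simp; ring
  have ht_lt : t < G ((0 - m) / σ) := hFc 0 ▸ lt_of_mul_lt_mul_left (ht ▸ hhalf) h1p.le
  obtain ⟨x, -, hx⟩ := isPreconnected_univ.intermediate_value_Ioc (Set.mem_univ _) (by simp)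
    hG_cont.continuousOn hG_bot ⟨pos_of_mul_pos_right (ht ▸ one_half_pos) h1p.le, ht_lt.le⟩
  have hFcx : Fc (m + σ * x) = t := by rw [hFc, ← hx]; congr 1; field_simp; ring
  have hneg : m + σ * x < 0 := hFc_mono.lt_iff_lt.mp (hFcx ▸ hFc 0 ▸ ht_lt)
  refine ⟨x, hx, (hmedian _).mpr ⟨hneg, hFcx ▸ ht⟩, fun M hM ↦ ?_⟩
  obtain ⟨-, hFcM⟩ := (hmedian M).mp hM
  exact hFc_mono.injective (mul_left_cancel₀ h1p.ne' (hFcM.trans (hFcx ▸ ht).symm))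

theorem location_scale_median_neg_case (p : ℝ) (hp0 : 0 ≤ p) (hp1 : p < 1)
    (Fc : ℝ → ℝ) (hFc_cont : Continuous Fc) (hFc_mono : StrictMono Fc)
    (hFc_bot : Tendsto Fc atBot (𝓝 0)) (hFc_top : Tendsto Fc atTop (𝓝 1))
    (G : ℝ → ℝ) (hG_cont : Continuous G) (hG_mono : StrictMono G)
    (hG_bot : Tendsto G atBot (𝓝 0)) (hG_top : Tendsto G atTop (𝓝 1))
    (hG_sym : ∀ x : ℝ, G (-x) = 1 - G x)
    (m σ : ℝ) (hσ : 0 < σ)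
    (hFc : ∀ β : ℝ, Fc β = G ((β - m) / σ)) (hm : m < 0)
    (hO : p / (1 - p) < |1 - 2 * Fc 0|) :
    ∃ x : ℝ, G x = (1 + p / (1 - p)) / 2 ∧
      IsMedian (mixCDF p Fc) (m + σ * x) ∧
      ∀ M : ℝ, IsMedian (mixCDF p Fc) M → M = m + σ * x :=
  location_scale_median_neg_case_general p hp0 hp1 Fc hFc_cont hFc_mono G hG_cont hG_mono hG_bot
    hG_sym m σ hσ hFc hm hO
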